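/- arXiv:1206.3875 — 3 statements merged into one kernel-verified Lean document; each statement's English description precedes it below -/
import Mathlib

section
/- The map sending a pair (m, n) of finite subsets of the integers to the pair (m', n'), where m' = {k-1 : k ∈ m, k ≠ 0} ∪ ({-1} if 0 ∉ n, else ∅) and n' = {k+1 : k ∈ n, k ≠ 0} ∪ ({1} if 0 ∉ m, else ∅), is a bijection on the set of pairs of finite subsets of ℤ. -/
/-- The large gauge transformation `G` acting on pairs `(m, n)` of finite subsets of `ℤ`:
`m' = {k-1 : k ∈ m, k ≠ 0} ∪ ({-1} if 0 ∉ n)` and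
`n' = {k+1 : k ∈ n, k ≠ 0} ∪ ({1} if 0 ∉ m)`. -/
def gaugeG (p : Finset ℤ × Finset ℤ) : Finset ℤ × Finset ℤ :=
  ((p.1.erase 0).image (· - 1) ∪ (if 0 ∈ p.2 then ∅ else {-1}),
   (p.2.erase 0).image (· + 1) ∪ (if 0 ∈ p.1 then ∅ else {1}))

/-- Inverse of `gaugeG`. -/
def gaugeGinv (p : Finset ℤ × Finset ℤ) : Finset ℤ × Finset ℤ :=
  (((p.1.image (· + 1)).erase 0) ∪ (if 1 ∈ p.2 then ∅ else {0}),
   ((p.2.image (· - 1)).erase 0) ∪ (if -1 ∈ p.1 then ∅ else {0}))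

lemma mem_gaugeG_fst (p : Finset ℤ × Finset ℤ) (x : ℤ) :
    x ∈ (gaugeG p).1 ↔ (x + 1 ∈ p.1 ∧ x ≠ -1) ∨ (x = -1 ∧ 0 ∉ p.2) := by
  simp only [gaugeG, Finset.mem_union, Finset.mem_image, Finset.mem_erase]
  split_ifs with h <;> simp
  · constructor
    · rintro ⟨a, ⟨ha0, ha⟩, rfl⟩; exact Or.inl ⟨by simpa using ha, by omega⟩
    · rintro (⟨h1, h2⟩ | ⟨rfl, hc⟩)
      · exact ⟨x + 1, ⟨by omega, h1⟩, by ring⟩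
      · exact absurd h hc
  · constructor
    · rintro (⟨a, ⟨ha0, ha⟩, rfl⟩ | rfl)
      · exact Or.inl ⟨by simpa using ha, by omega⟩
      · exact Or.inr ⟨rfl, h⟩
    · rintro (⟨h1, h2⟩ | ⟨rfl, _⟩)
      · exact Or.inl ⟨x + 1, ⟨by omega, h1⟩, by ring⟩
      · exact Or.inr rfl

lemma mem_gaugeG_snd (p : Finset ℤ × Finset ℤ) (x : ℤ) :
    x ∈ (gaugeG p).2 ↔ (x - 1 ∈ p.2 ∧ x ≠ 1) ∨ (x = 1 ∧ 0 ∉ p.1) := by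
  simp only [gaugeG, Finset.mem_union, Finset.mem_image, Finset.mem_erase]
  split_ifs with h <;> simp
  · constructor
    · rintro ⟨a, ⟨ha0, ha⟩, rfl⟩; exact Or.inl ⟨by simpa using ha, by omega⟩
    · rintro (⟨h1, h2⟩ | ⟨rfl, hc⟩)
      · exact ⟨x - 1, ⟨by omega, h1⟩, by ring⟩
      · exact absurd h hc
  · constructor
    · rintro (⟨a, ⟨ha0, ha⟩, rfl⟩ | rfl)
      · exact Or.inl ⟨by simpa using ha, by omega⟩
      · exact Or.inr ⟨rfl, h⟩
    · rintro (⟨h1, h2⟩ | ⟨rfl, _⟩)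
      · exact Or.inl ⟨x - 1, ⟨by omega, h1⟩, by ring⟩
      · exact Or.inr rfl

lemma mem_gaugeGinv_fst (p : Finset ℤ × Finset ℤ) (x : ℤ) :
    x ∈ (gaugeGinv p).1 ↔ (x - 1 ∈ p.1 ∧ x ≠ 0) ∨ (x = 0 ∧ 1 ∉ p.2) := by
  simp only [gaugeGinv, Finset.mem_union, Finset.mem_image, Finset.mem_erase]
  split_ifs with h <;> simp
  · constructor
    · rintro ⟨hx, a, ha, rfl⟩; exact Or.inl ⟨by simpa using ha, hx⟩
    · rintro (⟨h1, h2⟩ | ⟨rfl, hc⟩)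
      · exact ⟨h2, x - 1, h1, by ring⟩
      · exact absurd h hc
  · constructor
    · rintro (⟨hx, a, ha, rfl⟩ | rfl)
      · exact Or.inl ⟨by simpa using ha, hx⟩
      · exact Or.inr ⟨rfl, h⟩
    · rintro (⟨h1, h2⟩ | ⟨rfl, _⟩)
      · exact Or.inl ⟨h2, x - 1, h1, by ring⟩
      · exact Or.inr rfl

lemma mem_gaugeGinv_snd (p : Finset ℤ × Finset ℤ) (x : ℤ) :
    x ∈ (gaugeGinv p).2 ↔ (x + 1 ∈ p.2 ∧ x ≠ 0) ∨ (x = 0 ∧ -1 ∉ p.1) := by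
  simp only [gaugeGinv, Finset.mem_union, Finset.mem_image, Finset.mem_erase]
  split_ifs with h <;> simp
  · constructor
    · rintro ⟨hx, a, ha, rfl⟩; exact Or.inl ⟨by simpa using ha, hx⟩
    · rintro (⟨h1, h2⟩ | ⟨rfl, hc⟩)
      · exact ⟨h2, x + 1, h1, by ring⟩
      · exact absurd h hc
  · constructor
    · rintro (⟨hx, a, ha, rfl⟩ | rfl)
      · exact Or.inl ⟨by simpa using ha, hx⟩
      · exact Or.inr ⟨rfl, h⟩
    · rintro (⟨h1, h2⟩ | ⟨rfl, _⟩)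
      · exact Or.inl ⟨h2, x + 1, h1, by ring⟩
      · exact Or.inr rfl

theorem gaugeG_bijective : Function.Bijective gaugeG := by
  rw [Function.bijective_iff_has_inverse]
  refine ⟨gaugeGinv, ?_, ?_⟩
  · intro p
    refine Prod.ext (Finset.ext fun x => ?_) (Finset.ext fun x => ?_)
    · rw [mem_gaugeGinv_fst, mem_gaugeG_fst, mem_gaugeG_snd]
      constructor
      · rintro (⟨(⟨h1, h2⟩ | ⟨h1, h2⟩), hx⟩ | ⟨rfl, h⟩)
        · simpa using h1
        · omega
        · by_contra h0
          exact h (Or.inr ⟨rfl, by simpa using h0⟩)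
      · intro hx
        by_cases h0 : x = 0
        · subst h0
          refine Or.inr ⟨rfl, ?_⟩
          rintro (⟨_, h⟩ | ⟨h, _⟩) <;> simp_all
        · exact Or.inl ⟨Or.inl ⟨by simpa using hx, by omega⟩, h0⟩
    · rw [mem_gaugeGinv_snd, mem_gaugeG_snd, mem_gaugeG_fst]
      constructor
      · rintro (⟨(⟨h1, h2⟩ | ⟨h1, h2⟩), hx⟩ | ⟨rfl, h⟩)
        · simpa using h1
        · omega
        · by_contra h0
          exact h (Or.inr ⟨rfl, by simpa using h0⟩)
      · intro hx
        by_cases h0 : x = 0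
        · subst h0
          refine Or.inr ⟨rfl, ?_⟩
          rintro (⟨_, h⟩ | ⟨h, _⟩) <;> simp_all
        · exact Or.inl ⟨Or.inl ⟨by simpa using hx, by omega⟩, h0⟩
  · intro p
    refine Prod.ext (Finset.ext fun x => ?_) (Finset.ext fun x => ?_)
    · rw [mem_gaugeG_fst, mem_gaugeGinv_fst, mem_gaugeGinv_snd]
      constructor
      · rintro (⟨(⟨h1, h2⟩ | ⟨h1, h2⟩), hx⟩ | ⟨rfl, h⟩)
        · simpa using h1
        · omega
        · by_contra h0
          exact h (Or.inr ⟨rfl, by simpa using h0⟩)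
      · intro hx
        by_cases h0 : x = -1
        · subst h0
          refine Or.inr ⟨rfl, ?_⟩
          rintro (⟨_, h⟩ | ⟨h, _⟩) <;> simp_all
        · exact Or.inl ⟨Or.inl ⟨by simpa using hx, by omega⟩, h0⟩
    · rw [mem_gaugeG_snd, mem_gaugeGinv_snd, mem_gaugeGinv_fst]
      constructor
      · rintro (⟨(⟨h1, h2⟩ | ⟨h1, h2⟩), hx⟩ | ⟨rfl, h⟩)
        · simpa using h1
        · omega
        · by_contra h0
          exact h (Or.inr ⟨rfl, by simpa using h0⟩)
      · intro hx
        by_cases h0 : x = 1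
        · subst h0
          refine Or.inr ⟨rfl, ?_⟩
          rintro (⟨_, h⟩ | ⟨h, _⟩) <;> simp_all
        · exact Or.inl ⟨Or.inl ⟨by simpa using hx, by omega⟩, h0⟩
end

section
/- Under the bijection G on pairs of finite subsets of ℤ defined by m' = {k-1 : k ∈ m, k ≠ 0} ∪ ({-1} if 0 ∉ n) and n' = {k+1 : k ∈ n, k ≠ 0} ∪ ({1} if 0 ∉ m), the cardinalities satisfy |m'| - |n'| = |m| - |n|; i.e., G preserves the total charge Q = |m| - |n|. -/
lemma card_aux (m n : Finset ℤ) (c : ℤ) :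
    ((m.erase 0).image (· + c) ∪ (if 0 ∈ n then ∅ else {c})).card
      = (m.erase 0).card + (if 0 ∈ n then 0 else 1) := by
  have hinj : Function.Injective (· + c) := add_left_injective c
  by_cases h : 0 ∈ n
  · rw [if_pos h, if_pos h, Finset.union_empty, Finset.card_image_of_injective _ hinj, add_zero]
  · rw [if_neg h, if_neg h, Finset.card_union_of_disjoint,
      Finset.card_image_of_injective _ hinj, Finset.card_singleton]
    simp only [Finset.disjoint_singleton_right, Finset.mem_image, Finset.mem_erase]
    rintro ⟨a, ⟨ha, _⟩, hac⟩
    exact ha (by omega)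

/-- `G` preserves the total charge `Q = |m| - |n|`. -/
theorem gaugeG_preserves_charge (p : Finset ℤ × Finset ℤ) :
    ((gaugeG p).1.card : ℤ) - ((gaugeG p).2.card : ℤ) = (p.1.card : ℤ) - (p.2.card : ℤ) := by
  obtain ⟨m, n⟩ := p
  have h1 : ((m.erase 0).image (· - 1) ∪ (if 0 ∈ n then ∅ else {-1})).card
      = (m.erase 0).card + (if 0 ∈ n then 0 else 1) := by
    simpa [sub_eq_add_neg] using card_aux m n (-1)
  have h2 := card_aux n m 1
  simp only [gaugeG, h1, h2]
  by_cases hm : 0 ∈ m <;> by_cases hn : 0 ∈ n <;>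
    simp only [hm, hn, if_pos, if_neg, ite_true, ite_false,
      Finset.card_erase_of_mem, Finset.erase_eq_of_notMem, not_false_iff] <;>
    push_cast <;>
  first
    | omega
    | (have h3 := Finset.card_pos.mpr ⟨(0:ℤ), hm⟩
       have h4 := Finset.card_pos.mpr ⟨(0:ℤ), hn⟩
       omega)
    | (have h3 := Finset.card_pos.mpr ⟨(0:ℤ), hm⟩; omega)
    | (have h4 := Finset.card_pos.mpr ⟨(0:ℤ), hn⟩; omega)
end

section
/- Define the axial charge of a pair (m, n) of finite subsets of ℤ by Q⁵(m,n) = |{k ∈ m : k ≥ 0}| - |{k ∈ m : k < 0}| - |{k ∈ n : k > 0}| + |{k ∈ n : k ≤ 0}|. Then under the bijection G (with m' = {k-1 : k ∈ m, k ≠ 0} ∪ ({-1} if 0 ∉ n) and n' = {k+1 : k ∈ n, k ≠ 0} ∪ ({1} if 0 ∉ m)), one has Q⁵(m', n') = Q⁵(m,n) - 2. -/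
/-- The axial charge `Q⁵(m,n) = |{k ∈ m : k ≥ 0}| - |{k ∈ m : k < 0}|
  - |{k ∈ n : k > 0}| + |{k ∈ n : k ≤ 0}|`. -/
def axialCharge (p : Finset ℤ × Finset ℤ) : ℤ :=
  ((p.1.filter (fun k => 0 ≤ k)).card : ℤ) - ((p.1.filter (fun k => k < 0)).card : ℤ)
    - ((p.2.filter (fun k => 0 < k)).card : ℤ) + ((p.2.filter (fun k => k ≤ 0)).card : ℤ)

private lemma inj1 : Function.Injective (· - 1 : ℤ → ℤ) := fun a b h => by simpa using h
private lemma inj2 : Function.Injective (· + 1 : ℤ → ℤ) := fun a b h => by simpa using h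

private lemma hA (m : Finset ℤ) :
    ((m.erase 0).image (· - 1)).filter (fun k => 0 ≤ k)
      = (m.filter (fun k => 1 ≤ k)).image (· - 1) := by
  ext x
  simp only [Finset.mem_filter, Finset.mem_image, Finset.mem_erase]
  constructor
  · rintro ⟨⟨k, ⟨hk0, hkm⟩, rfl⟩, hx⟩; exact ⟨k, ⟨hkm, by omega⟩, rfl⟩
  · rintro ⟨k, ⟨hkm, hk⟩, rfl⟩; exact ⟨⟨k, ⟨by omega, hkm⟩, rfl⟩, by omega⟩

private lemma hB (m : Finset ℤ) :
    ((m.erase 0).image (· - 1)).filter (fun k => k < 0)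
      = (m.filter (fun k => k < 0)).image (· - 1) := by
  ext x
  simp only [Finset.mem_filter, Finset.mem_image, Finset.mem_erase]
  constructor
  · rintro ⟨⟨k, ⟨hk0, hkm⟩, rfl⟩, hx⟩; exact ⟨k, ⟨hkm, by omega⟩, rfl⟩
  · rintro ⟨k, ⟨hkm, hk⟩, rfl⟩; exact ⟨⟨k, ⟨by omega, hkm⟩, rfl⟩, by omega⟩

private lemma hC (n : Finset ℤ) :
    ((n.erase 0).image (· + 1)).filter (fun k => 0 < k)
      = (n.filter (fun k => 0 < k)).image (· + 1) := by
  ext x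
  simp only [Finset.mem_filter, Finset.mem_image, Finset.mem_erase]
  constructor
  · rintro ⟨⟨k, ⟨hk0, hkm⟩, rfl⟩, hx⟩; exact ⟨k, ⟨hkm, by omega⟩, rfl⟩
  · rintro ⟨k, ⟨hkm, hk⟩, rfl⟩; exact ⟨⟨k, ⟨by omega, hkm⟩, rfl⟩, by omega⟩

private lemma hD (n : Finset ℤ) :
    ((n.erase 0).image (· + 1)).filter (fun k => k ≤ 0)
      = (n.filter (fun k => k ≤ -1)).image (· + 1) := by
  ext x
  simp only [Finset.mem_filter, Finset.mem_image, Finset.mem_erase]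
  constructor
  · rintro ⟨⟨k, ⟨hk0, hkm⟩, rfl⟩, hx⟩; exact ⟨k, ⟨hkm, by omega⟩, rfl⟩
  · rintro ⟨k, ⟨hkm, hk⟩, rfl⟩; exact ⟨⟨k, ⟨by omega, hkm⟩, rfl⟩, by omega⟩

private lemma cm (m : Finset ℤ) :
    ((m.filter (fun k => 0 ≤ k)).card : ℤ)
      = (m.filter (fun k => 1 ≤ k)).card + (if 0 ∈ m then 1 else 0) := by
  by_cases h : 0 ∈ m
  · have : m.filter (fun k => 0 ≤ k) = insert 0 (m.filter (fun k => 1 ≤ k)) := by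
      ext x
      simp only [Finset.mem_filter, Finset.mem_insert]
      constructor
      · rintro ⟨hx, hx0⟩
        rcases eq_or_ne x 0 with rfl | hne
        · exact Or.inl rfl
        · exact Or.inr ⟨hx, by omega⟩
      · rintro (rfl | ⟨hx, hx1⟩)
        · exact ⟨h, le_refl 0⟩
        · exact ⟨hx, by omega⟩
    rw [this, Finset.card_insert_of_notMem (by simp)]
    simp [h]
  · have : m.filter (fun k => 0 ≤ k) = m.filter (fun k => 1 ≤ k) := by
      ext x
      simp only [Finset.mem_filter]
      constructor
      · rintro ⟨hx, hx0⟩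
        refine ⟨hx, ?_⟩
        rcases eq_or_ne x 0 with rfl | hne
        · exact absurd hx h
        · omega
      · rintro ⟨hx, hx1⟩; exact ⟨hx, by omega⟩
    rw [this]; simp [h]

private lemma cn (n : Finset ℤ) :
    ((n.filter (fun k => k ≤ 0)).card : ℤ)
      = (n.filter (fun k => k ≤ -1)).card + (if 0 ∈ n then 1 else 0) := by
  by_cases h : 0 ∈ n
  · have : n.filter (fun k => k ≤ 0) = insert 0 (n.filter (fun k => k ≤ -1)) := by
      ext x
      simp only [Finset.mem_filter, Finset.mem_insert]
      constructor
      · rintro ⟨hx, hx0⟩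
        rcases eq_or_ne x 0 with rfl | hne
        · exact Or.inl rfl
        · exact Or.inr ⟨hx, by omega⟩
      · rintro (rfl | ⟨hx, hx1⟩)
        · exact ⟨h, le_refl 0⟩
        · exact ⟨hx, by omega⟩
    rw [this, Finset.card_insert_of_notMem (by simp)]
    simp [h]
  · have : n.filter (fun k => k ≤ 0) = n.filter (fun k => k ≤ -1) := by
      ext x
      simp only [Finset.mem_filter]
      constructor
      · rintro ⟨hx, hx0⟩
        refine ⟨hx, ?_⟩
        rcases eq_or_ne x 0 with rfl | hne
        · exact absurd hx h
        · omega
      · rintro ⟨hx, hx1⟩; exact ⟨hx, by omega⟩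
    rw [this]; simp [h]

private lemma notmem1 (m : Finset ℤ) : (-1 : ℤ) ∉ (m.filter (fun k => k < 0)).image (· - 1) := by
  simp only [Finset.mem_image, Finset.mem_filter]
  rintro ⟨k, ⟨hk, hk0⟩, hke⟩
  omega

private lemma notmem2 (n : Finset ℤ) : (1 : ℤ) ∉ (n.filter (fun k => 0 < k)).image (· + 1) := by
  simp only [Finset.mem_image, Finset.mem_filter]
  rintro ⟨k, ⟨hk, hk0⟩, hke⟩
  omega

/-- The large gauge transformation lowers the axial charge by 2. -/
theorem axialCharge_gaugeG (p : Finset ℤ × Finset ℤ) :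
    axialCharge (gaugeG p) = axialCharge p - 2 := by
  obtain ⟨m, n⟩ := p
  simp only [axialCharge, gaugeG, Finset.filter_union]
  rw [hA, hB, hC, hD, cm m, cn n]
  have s1 : ({-1} : Finset ℤ).filter (fun k => 0 ≤ k) = ∅ := by decide
  have s2 : ({-1} : Finset ℤ).filter (fun k => k < 0) = {-1} := by decide
  have s3 : ({1} : Finset ℤ).filter (fun k => 0 < k) = {1} := by decide
  have s4 : ({1} : Finset ℤ).filter (fun k => k ≤ 0) = ∅ := by decide
  have e1 := Finset.card_image_of_injective (m.filter (fun k => 1 ≤ k)) inj1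
  have e2 := Finset.card_image_of_injective (m.filter (fun k => k < 0)) inj1
  have e3 := Finset.card_image_of_injective (n.filter (fun k => 0 < k)) inj2
  have e4 := Finset.card_image_of_injective (n.filter (fun k => k ≤ -1)) inj2
  by_cases ha : 0 ∈ m <;> by_cases hb : 0 ∈ n
  · rw [if_pos ha, if_pos hb, if_pos ha, if_pos hb, Finset.filter_empty, Finset.filter_empty,
      Finset.filter_empty, Finset.filter_empty, Finset.union_empty, Finset.union_empty,
      Finset.union_empty, Finset.union_empty, e1, e2, e3, e4]
    ring
  · rw [if_pos ha, if_neg hb, if_pos ha, if_neg hb, s1, s2, Finset.filter_empty,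
      Finset.filter_empty, Finset.union_empty, Finset.union_empty, Finset.union_empty,
      Finset.union_comm, ← Finset.insert_eq,
      Finset.card_insert_of_notMem (notmem1 m), e1, e2, e3, e4]
    push_cast
    ring
  · rw [if_neg ha, if_pos hb, if_neg ha, if_pos hb, s3, s4, Finset.filter_empty,
      Finset.filter_empty, Finset.union_empty, Finset.union_empty, Finset.union_empty,
      Finset.union_comm _ ({1} : Finset ℤ), ← Finset.insert_eq,
      Finset.card_insert_of_notMem (notmem2 n), e1, e2, e3, e4]
    push_cast
    ring
  · rw [if_neg ha, if_neg hb, if_neg ha, if_neg hb, s1, s2, s3, s4, Finset.union_empty,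
      Finset.union_empty,
      Finset.union_comm _ ({-1} : Finset ℤ), ← Finset.insert_eq,
      Finset.card_insert_of_notMem (notmem1 m),
      Finset.union_comm _ ({1} : Finset ℤ), ← Finset.insert_eq,
      Finset.card_insert_of_notMem (notmem2 n), e1, e2, e3, e4]
    push_cast
    ring
end
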